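/- A finite stratified ground normal logic program has at most one stable model; i.e., if M and M' are both stable models of a stratified program P, then M = M'. -/
import Mathlib


namespace ASP

/-- A ground normal rule: a head atom, a finite set of positive body atoms,
and a finite set of negated body atoms. -/
structure Rule (α : Type) where
  head : α
  pos : Finset α
  neg : Finset α
deriving DecidableEq

variable {α : Type}

/-- An interpretation `M` satisfies a rule `r` if `head r ∈ M` whenever
`pos r ⊆ M` and `neg r ∩ M = ∅`. -/
def ruleSat (M : Set α) (r : Rule α) : Prop :=
  ((↑r.pos : Set α) ⊆ M ∧ ∀ a ∈ r.neg, a ∉ M) → r.head ∈ M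

/-- `M` is a model of a program if it satisfies every rule. -/
def isModel (M : Set α) (P : Set (Rule α)) : Prop :=
  ∀ r ∈ P, ruleSat M r

/-- A definite program has no negated body atoms. -/
def isDefinite (P : Set (Rule α)) : Prop :=
  ∀ r ∈ P, r.neg = ∅

/-- The reduct `P^M`: the definite program
`{(head r, pos r, ∅) : r ∈ P, neg r ∩ M = ∅}`. -/
def reduct (P : Set (Rule α)) (M : Set α) : Set (Rule α) :=
  {r' | ∃ r ∈ P, (∀ a ∈ r.neg, a ∉ M) ∧ r' = ⟨r.head, r.pos, ∅⟩}

/-- `M` is the least model of `P`: a model contained in every model of `P`. -/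
def isLeastModel (M : Set α) (P : Set (Rule α)) : Prop :=
  isModel M P ∧ ∀ M', isModel M' P → M ⊆ M'

/-- `M` is a stable model (answer set) of `P` if `M` is the least model of
the reduct `P^M`. -/
def isStable (M : Set α) (P : Set (Rule α)) : Prop :=
  isLeastModel M (reduct P M)

/-- A program is stratified if there is a stratification function `s` on atoms. -/
def isStratified (P : Set (Rule α)) : Prop :=
  ∃ s : α → ℕ, ∀ r ∈ P,
    (∀ a ∈ r.pos, s a ≤ s r.head) ∧ (∀ a ∈ r.neg, s a < s r.head)

/-- `P ⊢ a` : atom `a` belongs to every stable model of `P`. -/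
def entails (P : Set (Rule α)) (a : α) : Prop :=
  ∀ M, isStable M P → a ∈ M

/-- `H1 ≤ H2` for finite ground programs: there is an injective map `f` from the
rules of `H1` to the rules of `H2` preserving heads and (weakly) enlarging bodies. -/
def progLE (H1 H2 : Finset (Rule α)) : Prop :=
  ∃ f : Rule α → Rule α, Set.InjOn f ↑H1 ∧
    ∀ r ∈ H1, f r ∈ H2 ∧ (f r).head = r.head ∧ r.pos ⊆ (f r).pos ∧ r.neg ⊆ (f r).neg

/-- `H1 < H2` iff `H1 ≤ H2` and `H1 ≠ H2`. -/
def progLT (H1 H2 : Finset (Rule α)) : Prop :=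
  progLE H1 H2 ∧ H1 ≠ H2

/-- A context-dependent example: an observation program `obs` together with finite
sets of positive and negative example atoms. -/
structure ILPExample (α : Type) where
  obs : Set (Rule α)
  epos : Finset α
  eneg : Finset α

/-- `H` covers example `E` (relative to background `B`): every positive example atom
belongs to every stable model of `B ∪ O ∪ H`, and no negative example atom does. -/
def covers (B : Set (Rule α)) (H : Finset (Rule α)) (E : ILPExample α) : Prop :=
  (∀ a ∈ E.epos, entails (B ∪ E.obs ∪ ↑H) a) ∧
  (∀ a ∈ E.eneg, ¬ entails (B ∪ E.obs ∪ ↑H) a)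

/-- `H` is a solution of the ILP task for distinct examples `(B, L, Es)`. -/
def isSolution (B L : Set (Rule α)) (Es : List (ILPExample α))
    (H : Finset (Rule α)) : Prop :=
  (↑H : Set (Rule α)) ⊆ L ∧ ∀ E ∈ Es, covers B H E

/-- A solution `H` is minimal if no solution `H'` satisfies `H' < H`. -/
def isMinimalSolution (B L : Set (Rule α)) (Es : List (ILPExample α))
    (H : Finset (Rule α)) : Prop :=
  isSolution B L Es H ∧ ¬∃ H', isSolution B L Es H' ∧ progLT H' H

/-- Derivability in a (definite) program: the inductively defined least model. -/
inductive Derives (Q : Set (Rule α)) : α → Prop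
  | step (r : Rule α) (hr : r ∈ Q) (hpos : ∀ b ∈ r.pos, Derives Q b) : Derives Q r.head

lemma derives_subset_model {M : Set α} {Q : Set (Rule α)} (hM : isModel M Q)
    (hQ : isDefinite Q) : ∀ a, Derives Q a → a ∈ M := by
  intro a h
  induction h with
  | step r hr hpos ih =>
    apply hM r hr
    constructor
    · intro b hb; exact ih b (Finset.mem_coe.mp hb)
    · intro b hb _; rw [hQ r hr] at hb; exact Finset.notMem_empty b hb

lemma stable_mem_iff {M : Set α} {P : Set (Rule α)} (h : isStable M P) :
    ∀ a, a ∈ M ↔ Derives (reduct P M) a := by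
  have hdef : isDefinite (reduct P M) := by
    rintro r' ⟨r, hr, hneg, rfl⟩; rfl
  have h1 : ∀ a, Derives (reduct P M) a → a ∈ M :=
    derives_subset_model h.1 hdef
  have h2 : M ⊆ {a | Derives (reduct P M) a} := by
    apply h.2
    rintro r' hr' ⟨hp, _⟩
    exact Derives.step r' hr' (fun b hb => hp (Finset.mem_coe.mpr hb))
  exact fun a => ⟨fun ha => h2 ha, h1 a⟩

lemma derives_transfer {P : Set (Rule α)} {s : α → ℕ}
    (hs : ∀ r ∈ P, (∀ a ∈ r.pos, s a ≤ s r.head) ∧ (∀ a ∈ r.neg, s a < s r.head))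
    {M M' : Set α} (n : ℕ)
    (hbelow : ∀ b, s b < n → (b ∈ M ↔ b ∈ M')) :
    ∀ a, Derives (reduct P M) a → s a ≤ n → Derives (reduct P M') a := by
  intro a h
  induction h with
  | step r' hr' hpos ih =>
    intro hsa
    obtain ⟨r, hrP, hneg, rfl⟩ := hr'
    have hneg' : ∀ b ∈ r.neg, b ∉ M' := by
      intro b hb
      have hlt : s b < s r.head := (hs r hrP).2 b hb
      rw [← hbelow b (lt_of_lt_of_le hlt hsa)]
      exact hneg b hb
    have hmem : (⟨r.head, r.pos, ∅⟩ : Rule α) ∈ reduct P M' := ⟨r, hrP, hneg', rfl⟩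
    exact Derives.step _ hmem (fun b hb => ih b hb (le_trans ((hs r hrP).1 b hb) hsa))

/-- A finite stratified ground normal logic program has at most
one stable model. -/
theorem finite_stratified_stable_model_unique {α : Type} (P : Set (Rule α))
    (hfin : P.Finite) (hstrat : isStratified P)
    (M M' : Set α) (hM : isStable M P) (hM' : isStable M' P) :
    M = M' := by
  obtain ⟨s, hs⟩ := hstrat
  have key : ∀ n, ∀ a, s a = n → (a ∈ M ↔ a ∈ M') := by
    intro n
    induction n using Nat.strong_induction_on with
    | _ n ih =>
      intro a hsa
      have hbelow : ∀ b, s b < n → (b ∈ M ↔ b ∈ M') := fun b hb => ih (s b) hb b rfl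
      have hbelow' : ∀ b, s b < n → (b ∈ M' ↔ b ∈ M) := fun b hb => (hbelow b hb).symm
      constructor
      · intro haM
        rw [stable_mem_iff hM']
        exact derives_transfer hs n hbelow a ((stable_mem_iff hM a).mp haM) (le_of_eq hsa)
      · intro haM'
        rw [stable_mem_iff hM]
        exact derives_transfer hs n hbelow' a ((stable_mem_iff hM' a).mp haM') (le_of_eq hsa)
  ext a
  exact key (s a) a rfl

end ASP
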